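/- arXiv:1208.4836 — 6 statements merged into one kernel-verified Lean document; each statement's English description precedes it below -/
import Mathlib

section
/- Let v₁, v₂, v₃, v₄ ∈ ℝ⁴ satisfy ⟨vᵢ, vᵢ⟩ = 1 for each i and ⟨vᵢ, vⱼ⟩ = −1 for all i ≠ j, where ⟨·,·⟩ is the Minkowski inner product. Then the first coordinates bᵢ = (vᵢ)₀ satisfy the Descartes relation 2(b₁² + b₂² + b₃² + b₄²) = (b₁ + b₂ + b₃ + b₄)². -/
/-- The Minkowski inner product on `ℝ⁴` in the isotropic basis:
`⟨v,w⟩ = −(v₀w₁ + v₁w₀)/2 + v₂w₂ + v₃w₃`. -/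
noncomputable def minkowskiInner (v w : Fin 4 → ℝ) : ℝ :=
  -(v 0 * w 1 + v 1 * w 0) / 2 + v 2 * w 2 + v 3 * w 3

/-!
Let `V` be the matrix with rows `vᵢ` and `Q` the matrix of the Minkowski form. The hypotheses say
`V Q Vᵀ = G`, where `G` has `1` on the diagonal and `-1` elsewhere; since `G² = 4`, `G` is
invertible, hence so are `V` and `Q`, and `Q⁻¹ = Vᵀ G⁻¹ V = Vᵀ G V / 4`. The basis vector `e₀` is
isotropic for the dual form, i.e. `(Q⁻¹)₀₀ = 0`, while `(Vᵀ G V)₀₀ = Σ bᵢ² - Σ_{i ≠ j} bᵢ bⱼ =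
2 Σ bᵢ² - (Σ bᵢ)²`.
-/

open Matrix

namespace Matrix

variable {n R : Type*} [Fintype n] [CommRing R]

theorem mul_mul_transpose_apply (V Q : Matrix n n R) (i j : n) :
    (V * Q * Vᵀ) i j = V i ⬝ᵥ Q *ᵥ V j := by
  simp only [mul_apply, transpose_apply, dotProduct, mulVec, Finset.mul_sum, Finset.sum_mul]
  rw [Finset.sum_comm]
  exact Finset.sum_congr rfl fun _ _ => Finset.sum_congr rfl fun _ _ => by ring

theorem transpose_mul_inv_mul_eq_inv_of_mul_mul_transpose_eq [DecidableEq n]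
    {V Q G : Matrix n n R} (h : V * Q * Vᵀ = G) (hG : IsUnit G.det) : Vᵀ * G⁻¹ * V = Q⁻¹ := by
  have hright : V * (Q * Vᵀ * G⁻¹) = 1 := by
    rw [← Matrix.mul_assoc, ← Matrix.mul_assoc, h, mul_nonsing_inv _ hG]
  have hleft : Q * (Vᵀ * G⁻¹ * V) = 1 := by
    simpa only [Matrix.mul_assoc] using mul_eq_one_comm.mp hright
  exact (inv_eq_right_inv hleft).symm

end Matrix

noncomputable def minkowskiMatrix : Matrix (Fin 4) (Fin 4) ℝ :=
  !![0, -1/2, 0, 0; -1/2, 0, 0, 0; 0, 0, 1, 0; 0, 0, 0, 1]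

theorem minkowskiInner_eq_dotProduct_mulVec (v w : Fin 4 → ℝ) :
    minkowskiInner v w = v ⬝ᵥ minkowskiMatrix *ᵥ w := by
  simp [minkowskiInner, minkowskiMatrix, dotProduct, mulVec, Fin.sum_univ_four]
  ring

theorem minkowskiMatrix_inv :
    minkowskiMatrix⁻¹ = !![0, -2, 0, 0; -2, 0, 0, 0; 0, 0, 1, 0; 0, 0, 0, 1] :=
  inv_eq_right_inv <| by
    ext i j
    fin_cases i <;> fin_cases j <;> simp [minkowskiMatrix, mul_apply, Fin.sum_univ_succ]

noncomputable def descartesGram : Matrix (Fin 4) (Fin 4) ℝ :=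
  !![1, -1, -1, -1; -1, 1, -1, -1; -1, -1, 1, -1; -1, -1, -1, 1]

theorem descartesGram_mul_smul_self : descartesGram * (1/4 : ℝ) • descartesGram = 1 := by
  ext i j
  fin_cases i <;> fin_cases j <;> simp [descartesGram, mul_apply, Fin.sum_univ_succ] <;> norm_num

/-- If four vectors of Minkowski space have norm `1` and pairwise inner products `−1`,
then their first coordinates satisfy the Descartes quadratic relation. -/
theorem descartes_from_minkowski (v : Fin 4 → Fin 4 → ℝ)
    (hnorm : ∀ i, minkowskiInner (v i) (v i) = 1)
    (hpair : ∀ i j, i ≠ j → minkowskiInner (v i) (v j) = -1) :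
    2 * ((v 0 0) ^ 2 + (v 1 0) ^ 2 + (v 2 0) ^ 2 + (v 3 0) ^ 2) =
      (v 0 0 + v 1 0 + v 2 0 + v 3 0) ^ 2 := by
  have hgram : of v * minkowskiMatrix * (of v)ᵀ = descartesGram := by
    ext i j
    rw [mul_mul_transpose_apply, ← minkowskiInner_eq_dotProduct_mulVec]
    change minkowskiInner (v i) (v j) = _
    fin_cases i <;> fin_cases j <;> simp [descartesGram, hnorm, hpair]
  have hinv := transpose_mul_inv_mul_eq_inv_of_mul_mul_transpose_eq hgram
    (isUnit_det_of_right_inverse descartesGram_mul_smul_self)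
  rw [inv_eq_right_inv descartesGram_mul_smul_self, minkowskiMatrix_inv] at hinv
  have key := congrFun (congrFun hinv 0) 0
  simp only [one_div, descartesGram, smul_of, smul_cons, smul_eq_mul, mul_one, mul_neg, smul_empty,
    Fin.isValue, mul_apply, transpose_apply, of_apply, cons_val', cons_val_fin_one,
    Fin.sum_univ_four, cons_val_zero, cons_val_one, cons_val] at key
  linear_combination 4 * key
end

section
/- Let four circles in the complex plane have centres z₁, z₂, z₃, z₄ ∈ ℂ and radii r₁, r₂, r₃, r₄ > 0, and suppose they are pairwise externally tangent, i.e. |zᵢ − zⱼ| = rᵢ + rⱼ for all i ≠ j. Then their curvatures kᵢ = 1/rᵢ satisfy the Descartes circle relation 2(k₁² + k₂² + k₃² + k₄²) = (k₁ + k₂ + k₃ + k₄)². -/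
/-!
The three vectors `z i - z 0` (`i = 1, 2, 3`) lie in the two-dimensional real space `ℂ`, so their
Gram matrix is singular. By the law of cosines its entries are determined by the distances
`‖z i - z j‖ = r i + r j`, and its determinant is `-4 (r 0 r 1 r 2 r 3)²` times
`2 ∑ kᵢ² - (∑ kᵢ)²`.
-/

open Matrix

theorem Matrix.det_gram_eq_zero_of_finrank_lt {𝕜 E n : Type*} [RCLike 𝕜] [NormedAddCommGroup E]
    [InnerProductSpace 𝕜 E] [FiniteDimensional 𝕜 E] [Fintype n] [DecidableEq n] (v : n → E)
    (h : Module.finrank 𝕜 E < Fintype.card n) : (gram 𝕜 v).det = 0 := by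
  by_contra hdet
  exact h.not_ge (det_gram_ne_zero_iff_linearIndependent.mp hdet).fintype_card_le_finrank

theorem Matrix.gram_sub_apply {E n : Type*} [NormedAddCommGroup E] [InnerProductSpace ℝ E]
    (x : n → E) (o : E) (i j : n) :
    gram ℝ (fun k ↦ x k - o) i j = (‖x i - o‖ ^ 2 + ‖x j - o‖ ^ 2 - ‖x i - x j‖ ^ 2) / 2 := by
  rw [gram_apply, real_inner_eq_norm_mul_self_add_norm_mul_self_sub_norm_sub_mul_self_div_two,
    sub_sub_sub_cancel_right]
  ring

theorem descartes_relation_of_products {a b c d : ℝ} (ha : a ≠ 0) (hb : b ≠ 0) (hc : c ≠ 0)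
    (hd : d ≠ 0)
    (h : 2 * ((b * c * d) ^ 2 + (a * c * d) ^ 2 + (a * b * d) ^ 2 + (a * b * c) ^ 2) =
      (b * c * d + a * c * d + a * b * d + a * b * c) ^ 2) :
    2 * ((1 / a) ^ 2 + (1 / b) ^ 2 + (1 / c) ^ 2 + (1 / d) ^ 2) =
      (1 / a + 1 / b + 1 / c + 1 / d) ^ 2 := by
  field_simp
  linear_combination h

/-- Descartes circle theorem: if four circles in the complex plane, with centres `z i`
and radii `r i > 0`, are pairwise externally tangent, then their curvatures `1 / r i`
satisfy the Descartes circle relation. -/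
theorem descartes_circle_theorem (z : Fin 4 → ℂ) (r : Fin 4 → ℝ)
    (hr : ∀ i, 0 < r i)
    (htangent : ∀ i j, i ≠ j → ‖z i - z j‖ = r i + r j) :
    2 * ((1 / r 0) ^ 2 + (1 / r 1) ^ 2 + (1 / r 2) ^ 2 + (1 / r 3) ^ 2) =
      (1 / r 0 + 1 / r 1 + 1 / r 2 + 1 / r 3) ^ 2 := by
  apply descartes_relation_of_products (hr 0).ne' (hr 1).ne' (hr 2).ne' (hr 3).ne'
  have hdet := det_gram_eq_zero_of_finrank_lt (𝕜 := ℝ)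
    (fun i : Fin 3 ↦ ![z 1, z 2, z 3] i - z 0) (by simp)
  rw [det_fin_three] at hdet
  simp only [gram_sub_apply, cons_val_zero, cons_val_one, cons_val, sub_self, norm_zero, htangent,
    ne_eq, Fin.reduceEq, one_ne_zero, not_false_eq_true] at hdet
  linear_combination (-1 / 4) * hdet
end

section
/- Let α, β, γ, δ ∈ ℂ with |αδ − βγ| = 1, and suppose b := 2·Im(β·conj(δ)) is nonzero. Then β·t + δ ≠ 0 for every real t, and the image of the real line under the Möbius transformation t ↦ (α·t + γ)/(β·t + δ) is exactly the circle of centre c := i·(γ·conj(β) − α·conj(δ))/b and radius 1/|b| with the single point α/β removed; that is, { (α·t + γ)/(β·t + δ) : t ∈ ℝ } = { w ∈ ℂ : |w − c| = 1/|b| } \ {α/β}. In particular the circle has curvature of absolute value |b| = |2·Im(β·conj(δ))| and curvature-times-centre of absolute value |i·(γ·conj(β) − α·conj(δ))|. -/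
/-!
Write `f z = (α z + γ)/(β z + δ)` and `D = α δ - β γ`. For `β z + δ ≠ 0` one has
`f z - c = i D · conj (β z̄ + δ) / (b (β z + δ))`, so `|f z - c| = 1/|b|` exactly when
`|β z̄ + δ| = |β z + δ|`; since `|β z̄ + δ|² - |β z + δ|² = 2 b · Im z`, this happens exactly when
`z` is real. Every `w ≠ α/β` is `f z` for `z = (δ w - γ)/(α - β w)`, and `α/β` is never attained
because `D ≠ 0`.
-/

open Complex ComplexConjugate

theorem normSq_mul_conj_add_sub_normSq_mul_add (β δ z : ℂ) :
    normSq (β * conj z + δ) - normSq (β * z + δ) = 4 * (β * conj δ).im * z.im := by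
  simp only [normSq_apply, add_re, add_im, mul_re, mul_im, conj_re, conj_im]
  ring

section Mobius

variable {α β γ δ : ℂ}

theorem mul_ofReal_add_ne_zero (hβδ : (β * conj δ).im ≠ 0) (t : ℝ) : β * t + δ ≠ 0 := by
  intro h
  obtain rfl : δ = -(β * t) := by linear_combination h
  apply hβδ
  simp [← mul_assoc, mul_conj]

theorem mobius_ne_div (hD : α * δ - β * γ ≠ 0) (hβ : β ≠ 0) {z : ℂ} (hz : β * z + δ ≠ 0) :
    (α * z + γ) / (β * z + δ) ≠ α / β := by
  rw [Ne, div_eq_div_iff hz hβ]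
  exact fun h => hD (by linear_combination -h)

theorem exists_mobius_eq (hD : α * δ - β * γ ≠ 0) {w : ℂ} (hw : α - β * w ≠ 0) :
    ∃ z, β * z + δ ≠ 0 ∧ (α * z + γ) / (β * z + δ) = w := by
  have hden : β * ((δ * w - γ) / (α - β * w)) + δ = (α * δ - β * γ) / (α - β * w) := by
    field_simp
    ring
  refine ⟨(δ * w - γ) / (α - β * w), ?_, ?_⟩
  · rw [hden]
    exact div_ne_zero hD hw
  · rw [hden, div_div_eq_mul_div, div_eq_iff hD, add_mul, mul_assoc, div_mul_cancel₀ _ hw]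
    ring

theorem mobius_sub_center {b : ℝ} (hb : b = 2 * (β * conj δ).im) (hb0 : b ≠ 0) {z : ℂ}
    (hz : β * z + δ ≠ 0) :
    (α * z + γ) / (β * z + δ) - I * (γ * conj β - α * conj δ) / b =
      I * (α * δ - β * γ) * conj (β * conj z + δ) / (b * (β * z + δ)) := by
  have hbI : (b : ℂ) * I = β * conj δ - conj β * δ := by
    rw [hb, ← sub_conj]
    simp [mul_comm]
  have key : (α * z + γ) * b - I * (γ * conj β - α * conj δ) * (β * z + δ) =
      I * (α * δ - β * γ) * (conj β * z + conj δ) := by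
    linear_combination (-I * (α * z + γ)) * hbI + (α * z + γ) * b * I_sq
  simp only [map_add, map_mul, conj_conj]
  rw [div_sub_div _ _ hz (ofReal_ne_zero.mpr hb0), ← key]
  ring

theorem norm_mobius_sub_center_eq_iff {b : ℝ} (hb : b = 2 * (β * conj δ).im) (hb0 : b ≠ 0)
    (hdet : ‖α * δ - β * γ‖ = 1) {z : ℂ} (hz : β * z + δ ≠ 0) :
    ‖(α * z + γ) / (β * z + δ) - I * (γ * conj β - α * conj δ) / b‖ = 1 / |b| ↔
      z.im = 0 := by
  have hb' : 0 < |b| := abs_pos.mpr hb0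
  have hz' : 0 < ‖β * z + δ‖ := norm_pos_iff.mpr hz
  have hnorm : ‖(α * z + γ) / (β * z + δ) - I * (γ * conj β - α * conj δ) / b‖ =
      ‖β * conj z + δ‖ / (|b| * ‖β * z + δ‖) := by
    rw [mobius_sub_center hb hb0 hz, norm_div, norm_mul, norm_mul, norm_mul, norm_I, hdet,
      norm_conj, norm_real, Real.norm_eq_abs, one_mul, one_mul]
  rw [hnorm, div_eq_div_iff (mul_pos hb' hz').ne' hb'.ne', one_mul, mul_comm,
    mul_right_inj' hb'.ne', ← sq_eq_sq₀ (norm_nonneg _) (norm_nonneg _), Complex.sq_norm,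
    Complex.sq_norm, ← sub_eq_zero, normSq_mul_conj_add_sub_normSq_mul_add]
  have hβδ : (β * conj δ).im ≠ 0 := fun h => hb0 (by rw [hb, h, mul_zero])
  simp only [mul_eq_zero, four_ne_zero, hβδ, false_or]

end Mobius

/-- The image of the real line under a unit-determinant Möbius transformation with
nonzero curvature `b = 2 Im(β conj δ)` is the circle of centre
`c = i(γ conj β − α conj δ)/b` and radius `1/|b|`, minus the point `α/β`;
moreover the denominator never vanishes on `ℝ`, and the curvature-times-centre
equals `i(γ conj β − α conj δ)`. -/
theorem mobius_image_of_real_line (α β γ δ : ℂ)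
    (hdet : ‖α * δ - β * γ‖ = 1)
    (b : ℝ) (hb : b = 2 * (β * (starRingEnd ℂ) δ).im) (hb0 : b ≠ 0)
    (c : ℂ) (hc : c = Complex.I * (γ * (starRingEnd ℂ) β - α * (starRingEnd ℂ) δ) / b) :
    (∀ t : ℝ, β * t + δ ≠ 0) ∧
    {w : ℂ | ∃ t : ℝ, (α * t + γ) / (β * t + δ) = w} =
      {w : ℂ | ‖w - c‖ = 1 / |b|} \ {α / β} ∧
    (b : ℂ) * c = Complex.I * (γ * (starRingEnd ℂ) β - α * (starRingEnd ℂ) δ) := by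
  have hβδ : (β * conj δ).im ≠ 0 := fun h => hb0 (by rw [hb, h, mul_zero])
  have hβ : β ≠ 0 := by
    rintro rfl
    simp at hβδ
  have hD : α * δ - β * γ ≠ 0 := by
    rw [← norm_ne_zero_iff, hdet]
    exact one_ne_zero
  refine ⟨mul_ofReal_add_ne_zero hβδ, ?_, by rw [hc, mul_div_cancel₀ _ (ofReal_ne_zero.mpr hb0)]⟩
  subst hc
  ext w
  constructor
  · rintro ⟨t, rfl⟩
    have ht := mul_ofReal_add_ne_zero hβδ t
    exact ⟨(norm_mobius_sub_center_eq_iff hb hb0 hdet ht).2 (ofReal_im t), mobius_ne_div hD hβ ht⟩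
  · rintro ⟨hw, hne : w ≠ α / β⟩
    have hw' : α - β * w ≠ 0 := fun h => hne (by rw [eq_div_iff hβ]; linear_combination -h)
    obtain ⟨z, hz, rfl⟩ := exists_mobius_eq hD hw'
    have hz_im : z.im = 0 := (norm_mobius_sub_center_eq_iff hb hb0 hdet hz).1 hw
    have hz_re : (z.re : ℂ) = z := Complex.ext (ofReal_re _) (by rw [ofReal_im, hz_im])
    exact ⟨z.re, by rw [hz_re]⟩
end

section
/- Let α, β, γ, δ ∈ ℂ with |αδ − βγ| = 1. Set b := 2·Im(β·conj(δ)) (the curvature), b' := 2·Im(α·conj(γ)) (the co-curvature), and z := i·(γ·conj(β) − α·conj(δ)) (the curvature-centre). Then b'·b = |z|² − 1. -/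
open ComplexConjugate

/-- Expanding both norms, the `|α|²|δ|²` terms cancel, and so do `|β|²|γ|²`; the cross terms
`2 Re (u v̄)` and `2 Re (u v)` with `u = α γ̄`, `v = β δ̄` differ by `4 Im u Im v`. -/
theorem Complex.four_mul_im_mul_conj_mul_im_mul_conj (α β γ δ : ℂ) :
    4 * (α * conj γ).im * (β * conj δ).im =
      ‖γ * conj β - α * conj δ‖ ^ 2 - ‖α * δ - β * γ‖ ^ 2 := by
  simp only [Complex.sq_norm, Complex.normSq_apply, Complex.mul_re, Complex.mul_im,
    Complex.sub_re, Complex.sub_im, Complex.conj_re, Complex.conj_im]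
  ring

/-- For a unit-determinant Möbius transformation, the curvature `b`, co-curvature `b'`
and curvature-centre `z` of the image of the real line satisfy `b' b = |z|² − 1`. -/
theorem cocurvature_relation (α β γ δ : ℂ)
    (hdet : ‖α * δ - β * γ‖ = 1)
    (b b' : ℝ) (z : ℂ)
    (hb : b = 2 * (β * (starRingEnd ℂ) δ).im)
    (hb' : b' = 2 * (α * (starRingEnd ℂ) γ).im)
    (hz : z = Complex.I * (γ * (starRingEnd ℂ) β - α * (starRingEnd ℂ) δ)) :
    b' * b = ‖z‖ ^ 2 - 1 := by
  have hnorm_z : ‖z‖ = ‖γ * conj β - α * conj δ‖ := by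
    rw [hz, norm_mul, Complex.norm_I, one_mul]
  have key := Complex.four_mul_im_mul_conj_mul_im_mul_conj α β γ δ
  rw [hdet] at key
  rw [hb, hb', hnorm_z]
  linear_combination key
end

section
/- Let α, β, γ, δ be Gaussian integers (elements of ℤ[i]) and set z := i·(γ·conj(β) − α·conj(δ)) ∈ ℤ[i]. If αδ − βγ = 1 or αδ − βγ = −1, then the real part of z is even and the imaginary part of z is odd. If αδ − βγ = i or αδ − βγ = −i, then the real part of z is odd and the imaginary part of z is even. -/
open Zsqrtd

/-!
Complex conjugation is the identity modulo 2 in `ℤ[i]`, so `γ conj β − α conj δ ≡ γβ − αδ`,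
which is `≡ αδ − βγ` modulo 2. Hence `z ≡ i (αδ − βγ)` modulo 2, and the parities of `Re z`
and `Im z` are those of `Im (αδ − βγ)` and `Re (αδ − βγ)`.
-/

namespace Zsqrtd

variable {d : ℤ}

theorem two_dvd_star_sub_self (x : ℤ√d) : (2 : ℤ√d) ∣ star x - x :=
  ⟨⟨0, -x.im⟩, by ext <;> simp; ring⟩

theorem two_dvd_mul_star_sub_mul_star_add_det (α β γ δ : ℤ√d) :
    (2 : ℤ√d) ∣ (γ * star β - α * star δ) + (α * δ - β * γ) := by
  have h : (γ * star β - α * star δ) + (α * δ - β * γ) =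
      γ * (star β - β) - α * (star δ - δ) := by ring
  rw [h]
  exact dvd_sub (dvd_mul_of_dvd_right (two_dvd_star_sub_self β) γ)
    (dvd_mul_of_dvd_right (two_dvd_star_sub_self δ) α)

theorem even_re_iff_and_even_im_iff_of_two_dvd_add {z w : ℤ√d} (h : (2 : ℤ√d) ∣ z + w) :
    (Even z.re ↔ Even w.re) ∧ (Even z.im ↔ Even w.im) := by
  rw [show (2 : ℤ√d) = ((2 : ℤ) : ℤ√d) by norm_cast, intCast_dvd] at h
  simp only [re_add, im_add, ← even_iff_two_dvd, Int.even_add] at h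
  exact h

end Zsqrtd

/-- Parity of the curvature-centre `z = i(γ conj β − α conj δ)` of a Gaussian circle:
if the determinant `αδ − βγ` is `±1` then `Re z` is even and `Im z` is odd;
if the determinant is `±i` then `Re z` is odd and `Im z` is even. -/
theorem curvature_centre_parity (α β γ δ : GaussianInt)
    (z : GaussianInt)
    (hz : z = sqrtd * (γ * star β - α * star δ)) :
    ((α * δ - β * γ = 1 ∨ α * δ - β * γ = -1) → Even z.re ∧ Odd z.im) ∧
    ((α * δ - β * γ = sqrtd ∨ α * δ - β * γ = -sqrtd) → Odd z.re ∧ Even z.im) := by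
  have hdvd : (2 : GaussianInt) ∣ z + sqrtd * (α * δ - β * γ) := by
    rw [hz, ← mul_add]
    exact dvd_mul_of_dvd_right (two_dvd_mul_star_sub_mul_star_add_det α β γ δ) _
  have hparity := even_re_iff_and_even_im_iff_of_two_dvd_add hdvd
  constructor <;> rintro (hdet | hdet) <;>
    simp [hdet, dmuld] at hparity <;> simp [hparity]
end

section
/- Let u, v, w ∈ ℤ[i]² be such that each of the pairs (u,v), (v,w), and (w,u) is a ℤ[i]-basis of ℤ[i]² (i.e. each corresponding 2×2 matrix over ℤ[i] has determinant a unit). Then there exist units ε₁, ε₂, ε₃ of ℤ[i] such that ε₁·u + ε₂·v + ε₃·w = 0. -/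
theorem Matrix.det_smul_add_det_smul_add_det_smul_eq_zero_fin_two {R : Type*} [CommRing R]
    (u v w : Fin 2 → R) :
    !![v 0, w 0; v 1, w 1].det • u + !![w 0, u 0; w 1, u 1].det • v +
      !![u 0, v 0; u 1, v 1].det • w = 0 := by
  ext i
  fin_cases i <;>
    simp only [Fin.zero_eta, Fin.mk_one, Matrix.det_fin_two_of, Pi.add_apply, Pi.smul_apply,
      smul_eq_mul, Pi.zero_apply] <;>
    ring

/-- If each of the pairs `(u,v)`, `(v,w)`, `(w,u)` is a `ℤ[i]`-basis of `ℤ[i]²`, then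
there are units `ε₁, ε₂, ε₃` of `ℤ[i]` with `ε₁ u + ε₂ v + ε₃ w = 0`. -/
theorem superbasis_unit_relation (u v w : Fin 2 → GaussianInt)
    (huv : IsUnit (Matrix.det !![u 0, v 0; u 1, v 1]))
    (hvw : IsUnit (Matrix.det !![v 0, w 0; v 1, w 1]))
    (hwu : IsUnit (Matrix.det !![w 0, u 0; w 1, u 1])) :
    ∃ ε₁ ε₂ ε₃ : GaussianInt, IsUnit ε₁ ∧ IsUnit ε₂ ∧ IsUnit ε₃ ∧
      ε₁ • u + ε₂ • v + ε₃ • w = 0 :=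
  ⟨_, _, _, hvw, hwu, huv, Matrix.det_smul_add_det_smul_add_det_smul_eq_zero_fin_two u v w⟩
end
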